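/- arXiv:2302.11709 — 2 statements merged into one kernel-verified Lean document; each statement's English description precedes it below -/
import Mathlib

section
/- Let C > 0 and τ > 0, and define f : (0,∞) → ℝ by f(x) = −(1/τ) log x. Then for all x, y ∈ [exp(−Cτ), 1]: (f(x) − f(y))² ≤ (8 exp(2Cτ)/τ) · ( (f(x) + f(y))/2 − f((x+y)/2) ). -/
/-! `f` is `-(1/τ) log`, so after clearing the factor `1/τ²` on both sides it suffices to bound
`(log x - log y)²` by `4 e^{2Cτ}` times the midpoint gap `2 log((x+y)/2) - log x - log y`
of `log`.
On `[a, ∞)` the logarithm is `1/a`-Lipschitz, so `(log x - log y)² ≤ (x - y)² / a²`, while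
`log t ≥ 1 - 1/t` applied to `t = ((x+y)/2)² / (xy)` bounds the midpoint gap below by
`((x - y)/(x + y))²`. With `a = e^{-Cτ}` and `x + y ≤ 2` the two bounds combine. -/

namespace Real

lemma log_sub_log_le_div {a x y : ℝ} (ha : 0 < a) (hay : a ≤ y) (hyx : y ≤ x) :
    log x - log y ≤ (x - y) / a := by
  have hy : 0 < y := ha.trans_le hay
  calc log x - log y = log (x / y) := (log_div (hy.trans_le hyx).ne' hy.ne').symm
    _ ≤ x / y - 1 := log_le_sub_one_of_pos (div_pos (hy.trans_le hyx) hy)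
    _ = (x - y) / y := by field_simp
    _ ≤ (x - y) / a := div_le_div_of_nonneg_left (sub_nonneg.2 hyx) ha hay

lemma sq_log_sub_log_le {a x y : ℝ} (ha : 0 < a) (hax : a ≤ x) (hay : a ≤ y) :
    (log x - log y) ^ 2 ≤ (x - y) ^ 2 / a ^ 2 := by
  rw [← div_pow, ← sq_abs, ← sq_abs ((x - y) / a)]
  refine pow_le_pow_left₀ (abs_nonneg _) ?_ 2
  rw [abs_div, abs_of_pos ha]
  rcases le_total y x with hyx | hxy
  · rw [abs_of_nonneg (sub_nonneg.2 (log_le_log (ha.trans_le hay) hyx)),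
      abs_of_nonneg (sub_nonneg.2 hyx)]
    exact log_sub_log_le_div ha hay hyx
  · rw [abs_sub_comm, abs_sub_comm x,
      abs_of_nonneg (sub_nonneg.2 (log_le_log (ha.trans_le hax) hxy)),
      abs_of_nonneg (sub_nonneg.2 hxy)]
    exact log_sub_log_le_div ha hax hxy

lemma sq_sub_div_add_le_log_midpoint_gap {x y : ℝ} (hx : 0 < x) (hy : 0 < y) :
    ((x - y) / (x + y)) ^ 2 ≤ 2 * log ((x + y) / 2) - log x - log y := by
  have ht : 0 < ((x + y) / 2) ^ 2 / (x * y) := by positivity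
  calc ((x - y) / (x + y)) ^ 2 = 1 - (((x + y) / 2) ^ 2 / (x * y))⁻¹ := by
        field_simp
        ring
    _ ≤ log (((x + y) / 2) ^ 2 / (x * y)) := one_sub_inv_le_log_of_pos ht
    _ = 2 * log ((x + y) / 2) - log x - log y := by
        rw [log_div (by positivity) (by positivity), log_mul hx.ne' hy.ne', log_pow]
        push_cast
        ring

lemma sq_log_sub_log_le_mul_log_midpoint_gap {a x y : ℝ} (ha : 0 < a) (hax : a ≤ x)
    (hay : a ≤ y) :
    (log x - log y) ^ 2 ≤ ((x + y) / a) ^ 2 * (2 * log ((x + y) / 2) - log x - log y) := by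
  have hxy : 0 < x + y := by linarith
  calc (log x - log y) ^ 2 ≤ (x - y) ^ 2 / a ^ 2 := sq_log_sub_log_le ha hax hay
    _ = ((x + y) / a) ^ 2 * ((x - y) / (x + y)) ^ 2 := by
        field_simp
    _ ≤ ((x + y) / a) ^ 2 * (2 * log ((x + y) / 2) - log x - log y) := by
        gcongr
        exact sq_sub_div_add_le_log_midpoint_gap (ha.trans_le hax) (ha.trans_le hay)

end Real

theorem sq_sub_le_strong_convexity_gap_general
    (C τ : ℝ)
    (f : ℝ → ℝ) (hf : ∀ x, f x = -(1 / τ) * Real.log x)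
    (x y : ℝ) (hx : x ∈ Set.Icc (Real.exp (-(C * τ))) 1)
    (hy : y ∈ Set.Icc (Real.exp (-(C * τ))) 1) :
    (f x - f y) ^ 2 ≤
      (8 * Real.exp (2 * C * τ) / τ) * ((f x + f y) / 2 - f ((x + y) / 2)) := by
  set a := Real.exp (-(C * τ))
  have ha : 0 < a := Real.exp_pos _
  have hexp : Real.exp (2 * C * τ) = (1 / a) ^ 2 := by
    rw [one_div, ← Real.exp_neg, neg_neg, ← Real.exp_nat_mul]
    ring_nf
  have hsum : ((x + y) / a) ^ 2 ≤ 4 * (1 / a) ^ 2 := by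
    rw [div_eq_mul_one_div, mul_pow]
    gcongr
    nlinarith [hx.1, hy.1, hx.2, hy.2]
  have hgap := Real.sq_sub_div_add_le_log_midpoint_gap (ha.trans_le hx.1) (ha.trans_le hy.1)
  have key := (Real.sq_log_sub_log_le_mul_log_midpoint_gap ha hx.1 hy.1).trans
    (mul_le_mul_of_nonneg_right hsum ((sq_nonneg _).trans hgap))
  calc (f x - f y) ^ 2 = (1 / τ) ^ 2 * (Real.log x - Real.log y) ^ 2 := by
        rw [hf, hf]
        ring
    _ ≤ (1 / τ) ^ 2 *
          (4 * (1 / a) ^ 2 * (2 * Real.log ((x + y) / 2) - Real.log x - Real.log y)) := by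
        gcongr
    _ = (8 * Real.exp (2 * C * τ) / τ) * ((f x + f y) / 2 - f ((x + y) / 2)) := by
        rw [hf, hf, hf, hexp]
        ring

/-- Lemma 4 of the paper: for `f(x) = −(1/τ) log x` on `[exp(−Cτ), 1]`,
`(f(x) − f(y))² ≤ (8 exp(2Cτ)/τ) ((f(x)+f(y))/2 − f((x+y)/2))`. -/
theorem sq_sub_le_strong_convexity_gap
    (C τ : ℝ) (hC : 0 < C) (hτ : 0 < τ)
    (f : ℝ → ℝ) (hf : ∀ x, f x = -(1 / τ) * Real.log x)
    (x y : ℝ) (hx : x ∈ Set.Icc (Real.exp (-(C * τ))) 1)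
    (hy : y ∈ Set.Icc (Real.exp (-(C * τ))) 1) :
    (f x - f y) ^ 2 ≤
      (8 * Real.exp (2 * C * τ) / τ) * ((f x + f y) / 2 - f ((x + y) / 2)) :=
  sq_sub_le_strong_convexity_gap_general C τ f hf x y hx hy
end

section
/- Let Θ be a finite set with |Θ| = M ≥ 1, let P be a probability measure on Z satisfying Bernstein's condition with constant c > 0, let π be the uniform distribution on Θ, and set α = 1/(c + C). Then E_S E_{θ∼ρ_S(π,α)}[R_P(θ)] − R_P* ≤ 2 log M/(αn), where E_S denotes expectation over the i.i.d. n-sample S from P. -/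
open MeasureTheory ProbabilityTheory
open scoped Classical

noncomputable section

/-- Kullback–Leibler divergence of `ρ` with respect to `π`. -/
def klDiv {Ω : Type*} [MeasurableSpace Ω] (ρ π : Measure Ω) : ENNReal :=
  if ρ ≪ π ∧ Integrable (llr ρ π) ρ then ENNReal.ofReal (∫ x, llr ρ π x ∂ρ) else ⊤

/-- The prediction risk `R_P(θ) = E_{Z∼P}[ℓ(Z,θ)]`. -/
def risk {Z Θ : Type*} [MeasurableSpace Z] (ℓ : Z → Θ → ℝ) (P : Measure Z) (θ : Θ) : ℝ :=
  ∫ z, ℓ z θ ∂P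

/-- The optimal risk `R_P* = inf_θ R_P(θ)`. -/
def optRisk {Z Θ : Type*} [MeasurableSpace Z] (ℓ : Z → Θ → ℝ) (P : Measure Z) : ℝ :=
  ⨅ θ, risk ℓ P θ

/-- The empirical risk `R̂_S(θ) = (1/n) ∑ᵢ ℓ(Zᵢ,θ)`. -/
def empRisk {Z Θ : Type*} {n : ℕ} (ℓ : Z → Θ → ℝ) (S : Fin n → Z) (θ : Θ) : ℝ :=
  (∑ i, ℓ (S i) θ) / n

/-- The PAC-Bayes risk estimate `R̂_S(ρ,π,α) = E_{θ∼ρ}[R̂_S(θ)] + KL(ρ∥π)/(αn)`. -/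
def riskEstimate {Z Θ : Type*} [MeasurableSpace Θ] {n : ℕ} (ℓ : Z → Θ → ℝ) (S : Fin n → Z)
    (ρ π : Measure Θ) (α : ℝ) : ℝ :=
  (∫ θ, empRisk ℓ S θ ∂ρ) + (klDiv ρ π).toReal / (α * n)


/-- The Gibbs posterior `ρ_S(π,α)`, with density proportional to
`exp(−αn R̂_S)` with respect to the prior `π`. -/
def gibbs {Z Θ : Type*} [MeasurableSpace Θ] {n : ℕ} (ℓ : Z → Θ → ℝ) (π : Measure Θ)
    (α : ℝ) (S : Fin n → Z) : Measure Θ :=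
  π.withDensity fun θ => ENNReal.ofReal
    (Real.exp (-(α * n) * empRisk ℓ S θ) / ∫ ϑ, Real.exp (-(α * n) * empRisk ℓ S ϑ) ∂π)


/-! The Gibbs posterior satisfies, by Jensen's inequality for `exp` against its weights,
`E_{ρ_S}[R] ≤ R(θ*) + (2/(αn)) log ∑_θ exp(αn(R̂_S(θ*) - R̂_S(θ)) + (αn/2)(R(θ) - R(θ*)))`.
Over the i.i.d. sample each summand factorises into `n` one-sample exponential moments, and
`e^y ≤ 1 + y + (y²/2) e^{|y|}`, Bernstein's condition and `α c e^{αC} ≤ 1` bound each of those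
by `exp(-(α/2)(R(θ) - R(θ*)))`. So the sum has expectation at most `M`, and the tangent bound
`log y ≤ log M + y/M - 1` turns this into the claimed `2 log M/(αn)`. -/

-- Closed before the theorem, whose binder `π` would otherwise parse as `Real.pi`.
section

open Real

namespace Real

lemma exp_le_one_add_add_sq_div_two_of_nonpos {y : ℝ} (hy : y ≤ 0) :
    exp y ≤ 1 + y + y ^ 2 / 2 := by
  have hmono : Monotone fun t => exp t - 1 - t - t ^ 2 / 2 := by
    refine monotone_of_hasDerivAt_nonneg (f' := fun t => exp t - 1 - t) (fun t => ?_)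
      fun t => show 0 ≤ exp t - 1 - t by linarith [add_one_le_exp t]
    exact ((((hasDerivAt_exp t).sub_const 1).sub (hasDerivAt_id' t)).sub
      ((hasDerivAt_pow 2 t).div_const 2)).congr_deriv (by ring)
  have := hmono hy
  simp only [exp_zero] at this
  linarith

lemma one_sub_sq_div_two_le_one_add_mul_exp_neg {y : ℝ} (hy : 0 ≤ y) :
    1 - y ^ 2 / 2 ≤ (1 + y) * exp (-y) := by
  have hmono : Monotone fun t => (1 + t) * exp (-t) + t ^ 2 / 2 := by
    refine monotone_of_hasDerivAt_nonneg (f' := fun t => t * (1 - exp (-t))) (fun t => ?_)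
      fun t => ?_
    · exact ((((hasDerivAt_id' t).const_add 1).mul (hasDerivAt_neg t).exp).add
        ((hasDerivAt_pow 2 t).div_const 2)).congr_deriv (by ring)
    · rcases le_total t 0 with ht | ht
      · exact mul_nonneg_of_nonpos_of_nonpos ht (by simpa using ht)
      · exact mul_nonneg ht (by simpa using ht)
  have := hmono hy
  simp only [neg_zero, exp_zero] at this
  linarith

lemma exp_le_one_add_add_sq_div_two_mul_exp_abs (y : ℝ) :
    exp y ≤ 1 + y + y ^ 2 / 2 * exp |y| := by
  rcases le_total y 0 with hy | hy
  · have : 1 ≤ exp |y| := one_le_exp (abs_nonneg y)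
    nlinarith [exp_le_one_add_add_sq_div_two_of_nonpos hy, sq_nonneg y]
  · rw [abs_of_nonneg hy]
    have hexp : exp y * exp (-y) = 1 := by rw [← exp_add, add_neg_cancel, exp_zero]
    nlinarith [one_sub_sq_div_two_le_one_add_mul_exp_neg hy, exp_pos y]

lemma one_sub_mul_exp_le_one (x : ℝ) : (1 - x) * exp x ≤ 1 := by
  have := mul_le_mul_of_nonneg_right (one_sub_le_exp_neg x) (exp_pos x).le
  rwa [← exp_add, neg_add_cancel, exp_zero] at this

lemma sum_exp_div_sum_exp_mul_le_log {ι : Type*} [Fintype ι] (a b : ι → ℝ) (i₀ : ι) :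
    ∑ i, exp (a i) / (∑ j, exp (a j)) * b i ≤ log (∑ i, exp (a i - a i₀ + b i)) := by
  set Z := ∑ j, exp (a j)
  have hZ : exp (a i₀) ≤ Z := Finset.single_le_sum (fun j _ => (exp_pos (a j)).le)
    (Finset.mem_univ i₀)
  have hZpos : 0 < Z := (exp_pos _).trans_le hZ
  have hjensen : exp (∑ i, exp (a i) / Z * b i) ≤ ∑ i, exp (a i) / Z * exp (b i) :=
    convexOn_exp.map_sum_le (fun i _ => by positivity)
      (by rw [← Finset.sum_div, div_self hZpos.ne']) fun i _ => Set.mem_univ _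
  have hsum : ∑ i, exp (a i) / Z * exp (b i) ≤ ∑ i, exp (a i - a i₀ + b i) := by
    refine Finset.sum_le_sum fun i _ => ?_
    rw [exp_add, exp_sub, div_mul_eq_mul_div, div_mul_eq_mul_div]
    exact div_le_div_of_nonneg_left (by positivity) (exp_pos _) hZ
  rw [le_log_iff_exp_le (Finset.sum_pos (fun i _ => exp_pos _) ⟨i₀, Finset.mem_univ _⟩)]
  exact hjensen.trans hsum

end Real

namespace MeasureTheory

variable {Ω : Type*} [MeasurableSpace Ω] {μ : Measure Ω} [IsProbabilityMeasure μ]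

lemma integral_exp_le_one_add_integral_add {X : Ω → ℝ} {B : ℝ}
    (hX : AEMeasurable X μ) (hXB : ∀ ω, |X ω| ≤ B) :
    ∫ ω, exp (X ω) ∂μ ≤ 1 + ∫ ω, X ω ∂μ + exp B / 2 * ∫ ω, X ω ^ 2 ∂μ := by
  have hX_int : Integrable X μ :=
    .of_mem_Icc (-B) B hX (ae_of_all _ fun ω => abs_le.1 (hXB ω))
  have hX2_int : Integrable (fun ω => X ω ^ 2) μ :=
    .of_mem_Icc 0 (B ^ 2) (hX.pow_const 2) (ae_of_all _ fun ω =>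
      ⟨sq_nonneg _, sq_le_sq' (abs_le.1 (hXB ω)).1 (abs_le.1 (hXB ω)).2⟩)
  have hexp_int : Integrable (fun ω => exp (X ω)) μ :=
    .of_mem_Icc 0 (exp B) (measurable_exp.comp_aemeasurable hX) (ae_of_all _ fun ω =>
      ⟨(exp_pos _).le, exp_le_exp.2 ((le_abs_self _).trans (hXB ω))⟩)
  calc ∫ ω, exp (X ω) ∂μ ≤ ∫ ω, 1 + X ω + exp B / 2 * X ω ^ 2 ∂μ := by
        refine integral_mono hexp_int (((integrable_const 1).add hX_int).add
          (hX2_int.const_mul _)) fun ω => ?_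
        have := exp_le_exp.2 (hXB ω)
        nlinarith [exp_le_one_add_add_sq_div_two_mul_exp_abs (X ω), sq_nonneg (X ω)]
    _ = 1 + ∫ ω, X ω ∂μ + exp B / 2 * ∫ ω, X ω ^ 2 ∂μ := by
        rw [integral_add (f := fun ω => 1 + X ω) ((integrable_const 1).add hX_int)
            (hX2_int.const_mul _),
          integral_add (integrable_const 1) hX_int, integral_const_mul]
        simp

lemma integral_le_add_log_div_of_le_add_log_div {f Y : Ω → ℝ} {a t M : ℝ} (ht : 0 < t)
    (hM : 0 < M) (hf : ∀ ω, 0 ≤ f ω) (hY : Integrable Y μ) (hY_pos : ∀ ω, 0 < Y ω)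
    (hYM : ∫ ω, Y ω ∂μ ≤ M) (hfY : ∀ ω, f ω ≤ a + log (Y ω) / t) :
    ∫ ω, f ω ∂μ ≤ a + log M / t := by
  have htangent : ∀ ω, f ω ≤ (a + (log M - 1) / t) + Y ω / (M * t) := by
    intro ω
    have hlog : log (Y ω) ≤ log M + (Y ω / M - 1) := by
      have := log_le_sub_one_of_pos (div_pos (hY_pos ω) hM)
      rw [log_div (hY_pos ω).ne' hM.ne'] at this
      linarith
    calc f ω ≤ a + log (Y ω) / t := hfY ω
      _ ≤ a + (log M + (Y ω / M - 1)) / t := by gcongr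
      _ = (a + (log M - 1) / t) + Y ω / (M * t) := by field_simp; ring
  calc ∫ ω, f ω ∂μ ≤ ∫ ω, (a + (log M - 1) / t) + Y ω / (M * t) ∂μ :=
        integral_mono_of_nonneg (ae_of_all _ hf) ((integrable_const _).add (hY.div_const _))
          (ae_of_all _ htangent)
    _ = (a + (log M - 1) / t) + (∫ ω, Y ω ∂μ) / (M * t) := by
        rw [integral_add (integrable_const _) (hY.div_const _), integral_div]
        simp
    _ ≤ (a + (log M - 1) / t) + M / (M * t) := by gcongr
    _ = a + log M / t := by field_simp; ring

end MeasureTheory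

lemma PMF.integral_uniformOfFintype {α : Type*} [Fintype α] [Nonempty α] [MeasurableSpace α]
    [MeasurableSingletonClass α] (f : α → ℝ) :
    ∫ a, f a ∂(PMF.uniformOfFintype α).toMeasure = (∑ a, f a) / Fintype.card α := by
  simp [PMF.integral_eq_sum, Finset.mul_sum, div_eq_inv_mul]

section Learning

variable {Z Θ : Type*} {ℓ : Z → Θ → ℝ}

lemma natCast_mul_empRisk {n : ℕ} (S : Fin n → Z) (θ : Θ) :
    (n : ℝ) * empRisk ℓ S θ = ∑ i, ℓ (S i) θ := by
  rcases n.eq_zero_or_pos with rfl | hn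
  · simp [empRisk]
  · rw [empRisk, mul_div_cancel₀ _ (by positivity)]

lemma exp_mul_empRisk_sub {n : ℕ} (α : ℝ) (S : Fin n → Z) (θ' θ : Θ) :
    exp (α * n * (empRisk ℓ S θ' - empRisk ℓ S θ)) =
      ∏ i, exp (α * (ℓ (S i) θ' - ℓ (S i) θ)) := by
  rw [← exp_sum, ← Finset.mul_sum, Finset.sum_sub_distrib, ← natCast_mul_empRisk,
    ← natCast_mul_empRisk, mul_assoc, mul_sub]

section Gibbs

variable [MeasurableSpace Θ] [MeasurableSingletonClass Θ] [Fintype Θ] [Nonempty Θ]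

lemma integral_gibbs_uniformOfFintype (α : ℝ) {n : ℕ} (S : Fin n → Z) (g : Θ → ℝ) :
    ∫ θ, g θ ∂gibbs ℓ (PMF.uniformOfFintype Θ).toMeasure α S =
      ∑ θ, exp (-(α * n) * empRisk ℓ S θ) / (∑ ϑ, exp (-(α * n) * empRisk ℓ S ϑ)) * g θ := by
  have hsum : 0 < ∑ ϑ, exp (-(α * n) * empRisk ℓ S ϑ) :=
    Finset.sum_pos (fun _ _ => exp_pos _) Finset.univ_nonempty
  rw [gibbs, integral_withDensity_eq_integral_toReal_smul .of_discrete
    (ae_of_all _ fun _ => ENNReal.ofReal_lt_top), PMF.integral_uniformOfFintype,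
    PMF.integral_uniformOfFintype, Finset.sum_div]
  refine Finset.sum_congr rfl fun θ _ => ?_
  rw [ENNReal.toReal_ofReal (by positivity), smul_eq_mul]
  field_simp

lemma integral_gibbs_uniformOfFintype_le (α : ℝ) {n : ℕ} (S : Fin n → Z) (g : Θ → ℝ)
    (θ₀ : Θ) {t : ℝ} (ht : 0 < t) :
    ∫ θ, g θ ∂gibbs ℓ (PMF.uniformOfFintype Θ).toMeasure α S ≤
      g θ₀ + log (∑ θ, exp (α * n * (empRisk ℓ S θ₀ - empRisk ℓ S θ) + t * (g θ - g θ₀))) / t := by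
  set a := fun θ => -(α * n) * empRisk ℓ S θ
  set w := fun θ => exp (a θ) / ∑ ϑ, exp (a ϑ)
  have hw : ∑ θ, w θ = 1 := by
    rw [← Finset.sum_div,
      div_self (Finset.sum_pos (fun _ _ => exp_pos _) ⟨θ₀, Finset.mem_univ _⟩).ne']
  have hshift : ∑ θ, w θ * (t * (g θ - g θ₀)) = t * (∑ θ, w θ * g θ - g θ₀) := by
    calc ∑ θ, w θ * (t * (g θ - g θ₀)) = t * ∑ θ, w θ * g θ - t * g θ₀ * ∑ θ, w θ := by
          rw [Finset.mul_sum, Finset.mul_sum, ← Finset.sum_sub_distrib]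
          exact Finset.sum_congr rfl fun _ _ => by ring
      _ = t * (∑ θ, w θ * g θ - g θ₀) := by rw [hw]; ring
  have hvar := sum_exp_div_sum_exp_mul_le_log a (fun θ => t * (g θ - g θ₀)) θ₀
  have hexp : ∀ θ, a θ - a θ₀ = α * n * (empRisk ℓ S θ₀ - empRisk ℓ S θ) := fun θ => by ring
  simp only [hexp] at hvar
  rw [integral_gibbs_uniformOfFintype, add_comm, ← sub_le_iff_le_add, le_div_iff₀ ht]
  linarith

end Gibbs

variable [MeasurableSpace Z]

lemma optRisk_eq_risk_of_forall_le [Finite Θ] {P : Measure Z} {θ₀ : Θ}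
    (h : ∀ θ, risk ℓ P θ₀ ≤ risk ℓ P θ) : optRisk ℓ P = risk ℓ P θ₀ :=
  have : Nonempty Θ := ⟨θ₀⟩
  le_antisymm (ciInf_le (Set.finite_range _).bddBelow θ₀) (le_ciInf h)

variable {P : Measure Z} [IsProbabilityMeasure P] {C : ℝ}

lemma integrable_exp_mul_loss_sub (hℓm : ∀ θ, Measurable fun z => ℓ z θ)
    (hℓ : ∀ z θ, ℓ z θ ∈ Set.Icc 0 C) {α : ℝ} (hα : 0 ≤ α) (θ' θ : Θ) :
    Integrable (fun z => exp (α * (ℓ z θ' - ℓ z θ))) P :=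
  integrable_exp_mul_of_le α C hα ((hℓm θ').sub (hℓm θ)).aemeasurable
    (ae_of_all _ fun z => by linarith [(hℓ z θ').2, (hℓ z θ).1])

lemma integrable_exp_mul_empRisk_sub_add (hℓm : ∀ θ, Measurable fun z => ℓ z θ)
    (hℓ : ∀ z θ, ℓ z θ ∈ Set.Icc 0 C) {α : ℝ} (hα : 0 ≤ α) (n : ℕ) (θ' θ : Θ) (b : ℝ) :
    Integrable (fun S => exp (α * n * (empRisk ℓ S θ' - empRisk ℓ S θ) + b))
      (Measure.pi fun _ : Fin n => P) := by
  simp_rw [exp_add, exp_mul_empRisk_sub]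
  exact (Integrable.fintype_prod fun _ => integrable_exp_mul_loss_sub hℓm hℓ hα θ' θ).mul_const _

lemma integral_exp_mul_loss_sub_le (hℓm : ∀ θ, Measurable fun z => ℓ z θ)
    (hℓ : ∀ z θ, ℓ z θ ∈ Set.Icc 0 C) {θ₀ θ : Θ} (hθ : risk ℓ P θ₀ ≤ risk ℓ P θ) {c : ℝ}
    (hBern : ∫ z, (ℓ z θ - ℓ z θ₀) ^ 2 ∂P ≤ c * (risk ℓ P θ - risk ℓ P θ₀)) {α : ℝ}
    (hα : 0 ≤ α) (hαc : α * c * exp (α * C) ≤ 1) :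
    ∫ z, exp (α * (ℓ z θ₀ - ℓ z θ)) ∂P ≤ exp (-(α / 2 * (risk ℓ P θ - risk ℓ P θ₀))) := by
  set Δ := risk ℓ P θ - risk ℓ P θ₀
  have hΔ : 0 ≤ α * Δ := mul_nonneg hα (sub_nonneg.2 hθ)
  have hint : ∀ θ, Integrable (fun z => ℓ z θ) P := fun θ =>
    .of_mem_Icc 0 C (hℓm θ).aemeasurable (ae_of_all _ (hℓ · θ))
  have hbound : ∀ z, |α * (ℓ z θ₀ - ℓ z θ)| ≤ α * C := fun z => by
    rw [abs_mul, abs_of_nonneg hα]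
    exact mul_le_mul_of_nonneg_left (abs_sub_le_iff.2
      ⟨by linarith [(hℓ z θ₀).2, (hℓ z θ).1], by linarith [(hℓ z θ₀).1, (hℓ z θ).2]⟩) hα
  have hmean : ∫ z, α * (ℓ z θ₀ - ℓ z θ) ∂P = -(α * Δ) := by
    rw [integral_const_mul, integral_sub (hint θ₀) (hint θ)]
    simp only [Δ, risk]
    ring
  have hsq : ∫ z, (α * (ℓ z θ₀ - ℓ z θ)) ^ 2 ∂P = α ^ 2 * ∫ z, (ℓ z θ - ℓ z θ₀) ^ 2 ∂P := by
    rw [← integral_const_mul]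
    congr with z
    ring
  calc ∫ z, exp (α * (ℓ z θ₀ - ℓ z θ)) ∂P
      ≤ 1 + ∫ z, α * (ℓ z θ₀ - ℓ z θ) ∂P + exp (α * C) / 2 * ∫ z, (α * (ℓ z θ₀ - ℓ z θ)) ^ 2 ∂P :=
        integral_exp_le_one_add_integral_add
          ((((hℓm θ₀).sub (hℓm θ)).const_mul α).aemeasurable) hbound
    _ ≤ 1 - α * Δ + exp (α * C) / 2 * (α ^ 2 * (c * Δ)) := by
        rw [hmean, hsq, ← sub_eq_add_neg]
        gcongr
    _ = 1 - α * Δ + (α * c * exp (α * C)) * (α * Δ) / 2 := by ring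
    _ ≤ 1 - α * Δ + α * Δ / 2 := by linarith [mul_le_of_le_one_left hΔ hαc]
    _ ≤ exp (-(α / 2 * Δ)) := by linarith [add_one_le_exp (-(α / 2 * Δ))]

lemma integral_exp_mul_empRisk_sub_add_le_one (hℓm : ∀ θ, Measurable fun z => ℓ z θ)
    (hℓ : ∀ z θ, ℓ z θ ∈ Set.Icc 0 C) {θ₀ θ : Θ} (hθ : risk ℓ P θ₀ ≤ risk ℓ P θ) {c : ℝ}
    (hBern : ∫ z, (ℓ z θ - ℓ z θ₀) ^ 2 ∂P ≤ c * (risk ℓ P θ - risk ℓ P θ₀)) {α : ℝ}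
    (hα : 0 ≤ α) (hαc : α * c * exp (α * C) ≤ 1) (n : ℕ) :
    ∫ S, exp (α * n * (empRisk ℓ S θ₀ - empRisk ℓ S θ) + α * n / 2 * (risk ℓ P θ - risk ℓ P θ₀))
      ∂(Measure.pi fun _ : Fin n => P) ≤ 1 := by
  simp_rw [exp_add, exp_mul_empRisk_sub]
  rw [integral_mul_const, integral_fintype_prod_eq_pow fun z => exp (α * (ℓ z θ₀ - ℓ z θ)),
    Fintype.card_fin]
  calc (∫ z, exp (α * (ℓ z θ₀ - ℓ z θ)) ∂P) ^ n * exp (α * n / 2 * (risk ℓ P θ - risk ℓ P θ₀))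
      ≤ exp (-(α / 2 * (risk ℓ P θ - risk ℓ P θ₀))) ^ n *
          exp (α * n / 2 * (risk ℓ P θ - risk ℓ P θ₀)) := by
        gcongr
        exact integral_exp_mul_loss_sub_le hℓm hℓ hθ hBern hα hαc
    _ = 1 := by
        rw [← exp_nat_mul, ← exp_add, ← exp_zero]
        ring_nf

lemma integral_sum_exp_mul_empRisk_sub_add_le_card [Fintype Θ]
    (hℓm : ∀ θ, Measurable fun z => ℓ z θ) (hℓ : ∀ z θ, ℓ z θ ∈ Set.Icc 0 C) {θ₀ : Θ}
    (hθ₀ : ∀ θ, risk ℓ P θ₀ ≤ risk ℓ P θ) {c : ℝ}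
    (hBern : ∀ θ, ∫ z, (ℓ z θ - ℓ z θ₀) ^ 2 ∂P ≤ c * (risk ℓ P θ - risk ℓ P θ₀)) {α : ℝ}
    (hα : 0 ≤ α) (hαc : α * c * exp (α * C) ≤ 1) (n : ℕ) :
    ∫ S, ∑ θ, exp (α * n * (empRisk ℓ S θ₀ - empRisk ℓ S θ) +
      α * n / 2 * (risk ℓ P θ - risk ℓ P θ₀)) ∂(Measure.pi fun _ : Fin n => P) ≤
      Fintype.card Θ := by
  rw [integral_finsetSum _ fun θ _ => integrable_exp_mul_empRisk_sub_add hℓm hℓ hα n θ₀ θ _]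
  exact (Finset.sum_le_sum fun θ _ => integral_exp_mul_empRisk_sub_add_le_one hℓm hℓ
    (hθ₀ θ) (hBern θ) hα hαc n).trans (by simp)

end Learning

end

/-- Learning in isolation on a finite parameter set: with the uniform prior and
`α = 1/(c+C)`, under Bernstein's condition the Gibbs posterior has excess risk at
most `2 log M/(αn)`. -/
theorem gibbs_finite_excess_risk
    {Z Θ : Type*} [MeasurableSpace Z] [MeasurableSpace Θ] [MeasurableSingletonClass Θ]
    [Fintype Θ] [Nonempty Θ]
    (M : ℕ) (hM : Fintype.card Θ = M) (hM1 : 1 ≤ M)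
    (ℓ : Z → Θ → ℝ) (hℓmeas : Measurable (Function.uncurry ℓ))
    (C : ℝ) (hC : 0 < C) (hℓ : ∀ z θ, ℓ z θ ∈ Set.Icc 0 C)
    (P : Measure Z) [IsProbabilityMeasure P]
    (θstar : Θ) (hθstar : ∀ θ, risk ℓ P θstar ≤ risk ℓ P θ)
    (c : ℝ) (hc : 0 < c)
    (hBern : ∀ θ, ∫ z, (ℓ z θ - ℓ z θstar) ^ 2 ∂P ≤ c * (risk ℓ P θ - optRisk ℓ P))
    (π : Measure Θ) (hπ : π = (PMF.uniformOfFintype Θ).toMeasure)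
    (n : ℕ) (hn : 0 < n) (α : ℝ) (hα : α = 1 / (c + C)) :
    (∫ S, ∫ θ, risk ℓ P θ ∂(gibbs ℓ π α S) ∂(Measure.pi fun _ : Fin n => P)) -
        optRisk ℓ P ≤
      2 * Real.log M / (α * n) := by
  subst hπ
  rw [optRisk_eq_risk_of_forall_le hθstar] at hBern ⊢
  have hℓm : ∀ θ, Measurable fun z => ℓ z θ := fun θ =>
    hℓmeas.comp (measurable_id.prodMk measurable_const)
  have hα0 : 0 < α := by rw [hα]; positivity
  have hαc : α * c * Real.exp (α * C) ≤ 1 := by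
    have : α * c = 1 - α * C := by rw [hα]; field_simp; ring
    rw [this]
    exact Real.one_sub_mul_exp_le_one _
  have hαn : 0 < α * n / 2 := by positivity
  have key := integral_le_add_log_div_of_le_add_log_div
    (f := fun S => ∫ θ, risk ℓ P θ ∂gibbs ℓ (PMF.uniformOfFintype Θ).toMeasure α S) hαn
    (by exact_mod_cast hM1 : (0 : ℝ) < M)
    (fun S => integral_nonneg fun θ => integral_nonneg fun z => (hℓ z θ).1)
    (integrable_finsetSum _ fun θ _ => integrable_exp_mul_empRisk_sub_add hℓm hℓ hα0.le n θstar θ _)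
    (fun S => Finset.sum_pos (fun _ _ => Real.exp_pos _) Finset.univ_nonempty)
    (hM ▸ integral_sum_exp_mul_empRisk_sub_add_le_card hℓm hℓ hθstar hBern hα0.le hαc n)
    (fun S => integral_gibbs_uniformOfFintype_le α S (risk ℓ P) θstar hαn)
  have : Real.log M / (α * n / 2) = 2 * Real.log M / (α * n) := by field_simp
  linarith
end
end
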